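/- Let K ∈ ℝ³ˣ³ be symmetric with tr(K)·I₃ − K positive definite. Then for every R ∈ SO(3), λ_min(tr(K)I₃ − K) · Ψ²(R) ≤ Ψ_K(R) ≤ λ_max(tr(K)I₃ − K) · Ψ²(R), where Ψ_K(R) := (1/2) tr(K(I₃ − R)) and Ψ²(R) := (1/4) tr(I₃ − R). -/

import Mathlib

/-!
For `R = exp (θ [u]ₓ)` the symmetric matrix `M = R + Rᵀ - (tr R - 1) I` equals
`2 (1 - cos θ) u uᵀ`, so it is positive semidefinite. Without choosing an axis this follows from
`4 M = a aᵀ + Mᵀ M`, where `a = 2 sin θ u` is the axial vector of `R - Rᵀ`; entrywise that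
identity reduces to the cofactor relations `adj R = Rᵀ` and the unit length of the columns of `R`.
Moreover `tr M = tr (I - R) = 4 Ψ²(R)` and, with `G = tr(K) I - K` symmetric,
`tr (G M) = 2 tr (K (I - R)) = 4 Ψ_K(R)`. The bounds are then
`λ_min(G) tr M ≤ tr (G M) ≤ λ_max(G) tr M`, which hold for every Hermitian `G` and positive
semidefinite `M` because `λ_min I ≤ G ≤ λ_max I` and the trace of a product of positive
semidefinite matrices is nonnegative.
-/

open Matrix

noncomputable section

/-- SO(3): 3×3 real orthogonal matrices with determinant 1. -/
def SO3 : Set (Matrix (Fin 3) (Fin 3) ℝ) :=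
  {R | R.transpose * R = 1 ∧ R.det = 1}

/-- Navigation function Ψ_K(R) = (1/2) tr(K(I₃ − R)). -/
def PsiK (K R : Matrix (Fin 3) (Fin 3) ℝ) : ℝ :=
  (1 / 2) * (K * (1 - R)).trace

/-- Squared normalized distance Ψ²(R) = (1/4) tr(I₃ − R). -/
def PsiSq (R : Matrix (Fin 3) (Fin 3) ℝ) : ℝ :=
  (1 / 4) * (1 - R).trace

open scoped MatrixOrder ComplexOrder

namespace Matrix

variable {n 𝕜 : Type*} [Fintype n] [RCLike 𝕜]

theorem PosSemidef.trace_mul_nonneg {A B : Matrix n n 𝕜} (hA : A.PosSemidef)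
    (hB : B.PosSemidef) : 0 ≤ (A * B).trace := by
  classical
  obtain ⟨X, rfl⟩ := CStarAlgebra.nonneg_iff_eq_star_mul_self.mp hB.nonneg
  rw [star_eq_conjTranspose, ← mul_assoc, trace_mul_comm, ← mul_assoc]
  exact (hA.mul_mul_conjTranspose_same X).trace_nonneg

variable [DecidableEq n]

theorem IsHermitian.iInf_eigenvalues_mul_trace_le {G M : Matrix n n 𝕜} (hG : G.IsHermitian)
    (hM : M.PosSemidef) : ((⨅ i, hG.eigenvalues i : ℝ) : 𝕜) * M.trace ≤ (G * M).trace := by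
  have hle : algebraMap ℝ (Matrix n n 𝕜) (⨅ i, hG.eigenvalues i) ≤ G := by
    refine algebraMap_le_of_le_spectrum (fun x hx => ?_) hG.isSelfAdjoint
    obtain ⟨i, rfl⟩ := hG.spectrum_real_eq_range_eigenvalues ▸ hx
    exact ciInf_le (Set.finite_range _).bddBelow i
  have := (Matrix.le_iff.mp hle).trace_mul_nonneg hM
  rw [sub_mul, trace_sub, Algebra.algebraMap_eq_smul_one, smul_one_mul, trace_smul] at this
  simpa [sub_nonneg, RCLike.real_smul_eq_coe_mul] using this

theorem IsHermitian.trace_mul_le_iSup_eigenvalues_mul {G M : Matrix n n 𝕜} (hG : G.IsHermitian)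
    (hM : M.PosSemidef) : (G * M).trace ≤ ((⨆ i, hG.eigenvalues i : ℝ) : 𝕜) * M.trace := by
  have hle : G ≤ algebraMap ℝ (Matrix n n 𝕜) (⨆ i, hG.eigenvalues i) := by
    refine le_algebraMap_of_spectrum_le (fun x hx => ?_) hG.isSelfAdjoint
    obtain ⟨i, rfl⟩ := hG.spectrum_real_eq_range_eigenvalues ▸ hx
    exact le_ciSup (Set.finite_range _).bddAbove i
  have := (Matrix.le_iff.mp hle).trace_mul_nonneg hM
  rw [sub_mul, trace_sub, Algebra.algebraMap_eq_smul_one, smul_one_mul, trace_smul] at this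
  simpa [sub_nonneg, RCLike.real_smul_eq_coe_mul] using this

end Matrix

def rotationAxisMatrix (R : Matrix (Fin 3) (Fin 3) ℝ) : Matrix (Fin 3) (Fin 3) ℝ :=
  R + Rᵀ - (R.trace - 1) • 1

def rotationAxisVector (R : Matrix (Fin 3) (Fin 3) ℝ) : Fin 3 → ℝ :=
  ![R 2 1 - R 1 2, R 0 2 - R 2 0, R 1 0 - R 0 1]

theorem transpose_rotationAxisMatrix (R : Matrix (Fin 3) (Fin 3) ℝ) :
    (rotationAxisMatrix R)ᵀ = rotationAxisMatrix R := by
  simp [rotationAxisMatrix, add_comm]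

theorem trace_rotationAxisMatrix (R : Matrix (Fin 3) (Fin 3) ℝ) :
    (rotationAxisMatrix R).trace = (1 - R).trace := by
  simp only [rotationAxisMatrix, trace_sub, trace_add, trace_transpose, trace_smul, trace_one,
    Fintype.card_fin, Nat.cast_ofNat, smul_eq_mul]
  ring

theorem trace_mul_rotationAxisMatrix {G : Matrix (Fin 3) (Fin 3) ℝ} (hG : G.IsSymm)
    (R : Matrix (Fin 3) (Fin 3) ℝ) :
    (G * rotationAxisMatrix R).trace = 2 * (G * R).trace - (R.trace - 1) * G.trace := by
  have hGRt : (G * Rᵀ).trace = (G * R).trace := by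
    rw [← trace_transpose, transpose_mul, transpose_transpose, hG.eq, trace_mul_comm]
  simp only [rotationAxisMatrix, mul_sub, mul_add, Algebra.mul_smul_comm, mul_one, trace_sub,
    trace_add, hGRt, trace_smul, smul_eq_mul]
  ring

theorem SO3.adjugate_eq_transpose {R : Matrix (Fin 3) (Fin 3) ℝ} (hR : R ∈ SO3) :
    R.adjugate = Rᵀ := by
  rw [← inv_eq_left_inv hR.1, inv_def, hR.2, Ring.inverse_one, one_smul]

theorem SO3.smul_rotationAxisMatrix_eq {R : Matrix (Fin 3) (Fin 3) ℝ} (hR : R ∈ SO3) :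
    (4 : ℝ) • rotationAxisMatrix R =
      vecMulVec (rotationAxisVector R) (rotationAxisVector R) +
        (rotationAxisMatrix R)ᵀ * rotationAxisMatrix R := by
  have hcof : ∀ i j, R.adjugate j i = R i j := fun i j => by
    rw [SO3.adjugate_eq_transpose hR, transpose_apply]
  have hcol : ∀ j, (Rᵀ * R) j j = 1 := fun j => by rw [hR.1, one_apply_eq]
  have c00 := hcof 0 0; have c01 := hcof 0 1; have c02 := hcof 0 2
  have c10 := hcof 1 0; have c11 := hcof 1 1; have c12 := hcof 1 2
  have c20 := hcof 2 0; have c21 := hcof 2 1; have c22 := hcof 2 2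
  have o0 := hcol 0; have o1 := hcol 1; have o2 := hcol 2
  simp only [adjugate_fin_three, mul_apply, transpose_apply, Fin.sum_univ_three, of_apply,
    cons_val', cons_val_zero, cons_val_one, cons_val_two, empty_val', cons_val_fin_one,
    tail_cons, vecHead] at c00 c01 c02 c10 c11 c12 c20 c21 c22 o0 o1 o2
  rw [transpose_rotationAxisMatrix]
  ext i j
  fin_cases i <;> fin_cases j <;>
    simp [rotationAxisMatrix, rotationAxisVector, mul_apply, one_apply, Fin.sum_univ_three,
      trace_fin_three]
  · linear_combination -o0 - o1 - o2 - 2 * c00 + 2 * c11 + 2 * c22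
  · linear_combination -2 * c01 - 2 * c10
  · linear_combination -2 * c02 - 2 * c20
  · linear_combination -2 * c01 - 2 * c10
  · linear_combination -o0 - o1 - o2 + 2 * c00 - 2 * c11 + 2 * c22
  · linear_combination -2 * c12 - 2 * c21
  · linear_combination -2 * c02 - 2 * c20
  · linear_combination -2 * c12 - 2 * c21
  · linear_combination -o0 - o1 - o2 + 2 * c00 + 2 * c11 - 2 * c22

theorem SO3.rotationAxisMatrix_posSemidef {R : Matrix (Fin 3) (Fin 3) ℝ} (hR : R ∈ SO3) :
    (rotationAxisMatrix R).PosSemidef := by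
  have h4 : ((4 : ℝ) • rotationAxisMatrix R).PosSemidef := by
    rw [SO3.smul_rotationAxisMatrix_eq hR]
    simpa using (posSemidef_vecMulVec_self_star (rotationAxisVector R)).add
      (posSemidef_conjTranspose_mul_self (rotationAxisMatrix R))
  simpa using h4.smul (a := (4 : ℝ)⁻¹) (by norm_num)

theorem psiSq_eq_trace_rotationAxisMatrix (R : Matrix (Fin 3) (Fin 3) ℝ) :
    PsiSq R = (rotationAxisMatrix R).trace / 4 := by
  rw [trace_rotationAxisMatrix, PsiSq]
  ring

theorem psiK_eq_trace_mul_rotationAxisMatrix {K : Matrix (Fin 3) (Fin 3) ℝ}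
    (hG : (K.trace • (1 : Matrix (Fin 3) (Fin 3) ℝ) - K).IsSymm) (R : Matrix (Fin 3) (Fin 3) ℝ) :
    PsiK K R = ((K.trace • (1 : Matrix (Fin 3) (Fin 3) ℝ) - K) * rotationAxisMatrix R).trace / 4 := by
  rw [trace_mul_rotationAxisMatrix hG, PsiK]
  simp only [one_div, mul_sub, mul_one, trace_sub, sub_mul, Algebra.smul_mul_assoc, one_mul,
    trace_smul, smul_eq_mul, trace_one, Fintype.card_fin, Nat.cast_ofNat]
  ring

theorem navigation_function_bounds_general (K : Matrix (Fin 3) (Fin 3) ℝ)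
    (hPD : (K.trace • (1 : Matrix (Fin 3) (Fin 3) ℝ) - K).PosDef)
    (R : Matrix (Fin 3) (Fin 3) ℝ) (hR : R ∈ SO3) :
    (⨅ i, hPD.1.eigenvalues i) * PsiSq R ≤ PsiK K R ∧
      PsiK K R ≤ (⨆ i, hPD.1.eigenvalues i) * PsiSq R := by
  have hM := SO3.rotationAxisMatrix_posSemidef hR
  rw [psiSq_eq_trace_rotationAxisMatrix,
    psiK_eq_trace_mul_rotationAxisMatrix (isHermitian_iff_isSymm.mp hPD.1)]
  have hlow := hPD.1.iInf_eigenvalues_mul_trace_le hM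
  have hhigh := hPD.1.trace_mul_le_iSup_eigenvalues_mul hM
  simp only [RCLike.ofReal_real_eq_id, id] at hlow hhigh
  constructor <;> linarith

theorem navigation_function_bounds (K : Matrix (Fin 3) (Fin 3) ℝ)
    (hKsymm : K.IsSymm) (hPD : (K.trace • (1 : Matrix (Fin 3) (Fin 3) ℝ) - K).PosDef)
    (R : Matrix (Fin 3) (Fin 3) ℝ) (hR : R ∈ SO3) :
    (⨅ i, hPD.1.eigenvalues i) * PsiSq R ≤ PsiK K R ∧
      PsiK K R ≤ (⨆ i, hPD.1.eigenvalues i) * PsiSq R :=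
  navigation_function_bounds_general K hPD R hR

end
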